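/- With T = Σ_{i=0}^{n−1} h_i ⊗ Λ_i + d ⊗ c and T̃ = (1/n)(ρ ⊗ c + c ⊗ ρ − ((n²−1)/12) c ⊗ c), both elements of 𝔥 ⊗ 𝔥, one has Σ_{k=1}^{n} (τ^k ⊗ id)(T − T̃) = 0. -/

import Mathlib

/-!
Put `P = ∑_{k=1}^{n} τ^k`, so that the sum in question is `(P ⊗ id)(T - T̃)`. Since `τ` permutes
the `h_i` cyclically, `P h_i = c` for every `i`, while `P ρ = n ρ` and `P c = n c`. Pairing with
the `h_i` and with `d` shows `ρ = ∑_j j(n-j)/2 · h_j + n d` (the coefficients `j(n-j)/2` have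
second difference `-1` away from `j = 0`, matching the Cartan matrix), and
`∑_j j(n-j)/2 = n(n²-1)/12` then gives `P d = ρ - (n²-1)/12 · c`. Hence
`(P ⊗ id) T = c ⊗ ρ + ρ ⊗ c - (n²-1)/12 · c ⊗ c = (P ⊗ id) T̃`.
-/

open scoped TensorProduct
open Fin.NatCast Finset

noncomputable section

/-- The Cartan matrix of affine type `A^{(1)}_{n-1}` (with the convention
`a₀₁ = a₁₀ = -2` when `n = 2`). -/
def cartanA1 (n : ℕ) [NeZero n] (i j : Fin n) : ℂ :=
  (if i = j then 2 else 0) + (if i + 1 = j then -1 else 0) + (if j + 1 = i then -1 else 0)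

theorem Module.Basis.eq_zero_of_forall_apply_eq_zero {ι R M : Type*} [CommSemiring R]
    [AddCommMonoid M] [Module R M] [DecidableEq ι] (B : M →ₗ[R] M →ₗ[R] R)
    (b : Module.Basis ι R M) (b' : ι → M)
    (hb' : ∀ i j, B (b i) (b' j) = if i = j then 1 else 0)
    {x : M} (hx : ∀ i, B x (b i) = 0) : x = 0 := by
  have hBx : B x = 0 := b.ext fun i => by simp [hx]
  have hcoord : ∀ j, B.flip (b' j) = b.coord j := fun j =>
    b.ext fun i => by simp [hb', Finsupp.single_apply]
  refine b.forall_coord_eq_zero_iff.mp fun j => ?_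
  rw [← hcoord, LinearMap.flip_apply, hBx, LinearMap.zero_apply]

theorem TensorProduct.sum_map_apply {ι R M N P Q : Type*} [CommSemiring R]
    [AddCommMonoid M] [Module R M] [AddCommMonoid N] [Module R N] [AddCommMonoid P] [Module R P]
    [AddCommMonoid Q] [Module R Q] (s : Finset ι) (f : ι → M →ₗ[R] N) (g : P →ₗ[R] Q)
    (x : M ⊗[R] P) : ∑ i ∈ s, map (f i) g x = map (∑ i ∈ s, f i) g x := by
  have := map_sum ((mapBilinear (RingHom.id R) M P N Q).flip g) f s
  simp only [LinearMap.flip_apply, mapBilinear_apply] at this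
  rw [this, LinearMap.sum_apply]

theorem Fin.sum_Icc_natCast {M : Type*} [AddCommMonoid M] {n : ℕ} [NeZero n] (f : Fin n → M) :
    ∑ k ∈ Icc 1 n, f k = ∑ i, f i := by
  rw [← Ico_add_one_right_eq_Icc, sum_Ico_eq_sum_range, Nat.add_sub_cancel,
    ← Fin.sum_univ_eq_sum_range (fun k : ℕ => f ↑(1 + k))]
  simp only [add_comm 1, Nat.cast_succ, Fin.cast_val_eq_self]
  exact Fintype.sum_equiv (Equiv.addRight 1) _ _ fun _ => rfl

theorem Finset.sum_range_mul_sub {K : Type*} [Field K] [CharZero K] (N : ℕ) :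
    ∑ j ∈ range N, (j : K) * (N - j) = N * (N ^ 2 - 1) / 6 := by
  induction N with
  | zero => simp
  | succ N ih =>
    have gauss : (∑ j ∈ range (N + 1), (j : K)) * 2 = (N + 1) * N := by
      have := congrArg (Nat.cast (R := K)) (sum_range_id_mul_two (N + 1))
      push_cast at this
      simpa using this
    calc ∑ j ∈ range (N + 1), (j : K) * (↑(N + 1) - j)
        = ∑ j ∈ range (N + 1), (j : K) * (N - j) + ∑ j ∈ range (N + 1), (j : K) := by
          rw [← sum_add_distrib]
          exact sum_congr rfl fun j _ => by push_cast; ring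
      _ = N * (N ^ 2 - 1) / 6 + ∑ j ∈ range (N + 1), (j : K) := by
          rw [sum_range_succ, ih, sub_self, mul_zero, add_zero]
      _ = ↑(N + 1) * (↑(N + 1) ^ 2 - 1) / 6 := by
          push_cast
          linear_combination gauss / 2

section CyclicShift

variable {R M : Type*} [Semiring R] [AddCommMonoid M] [Module R M] {n : ℕ}
  {f : Module.End R M}

theorem Module.End.pow_apply_eq_of_apply_eq_add_one [NeZero n] {v : Fin n → M}
    (hf : ∀ i, f (v i) = v (i + 1)) (k : ℕ) (i : Fin n) : (f ^ k) (v i) = v (i + k) := by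
  induction k with
  | zero => simp
  | succ k ih => rw [pow_succ', Module.End.mul_apply, ih, hf, Nat.cast_succ, add_assoc]

theorem Module.End.sum_Icc_pow_apply_eq_sum [NeZero n] {v : Fin n → M}
    (hf : ∀ i, f (v i) = v (i + 1)) (i : Fin n) : ∑ k ∈ Icc 1 n, (f ^ k) (v i) = ∑ j, v j := by
  simp only [pow_apply_eq_of_apply_eq_add_one hf]
  rw [Fin.sum_Icc_natCast fun j => v (i + j)]
  exact Equiv.sum_comp (Equiv.addLeft i) v

theorem Module.End.sum_Icc_pow_apply_of_apply_eq {w : M} (hw : f w = w) :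
    ∑ k ∈ Icc 1 n, (f ^ k) w = n • w := by
  simp [Module.End.pow_apply, Function.iterate_fixed hw]

end CyclicShift

theorem sum_mul_cartanA1 {n : ℕ} [NeZero n] (f : Fin n → ℂ) (m : Fin n) :
    ∑ j, f j * cartanA1 n j m = 2 * f m - f (m - 1) - f (m + 1) := by
  simp only [cartanA1, mul_add, mul_ite, mul_zero, ← eq_sub_iff_add_eq (b := m),
    eq_comm (a := m + 1), sum_add_distrib, sum_ite_eq', mem_univ, if_true]
  ring

/-- The coefficient of `h_j` in `ρ = ∑_j rhoCoeff n j • h_j + n • d`. -/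
def rhoCoeff (n : ℕ) (j : Fin n) : ℂ := j.val * (n - j.val) / 2

theorem rhoCoeff_zero {n : ℕ} [NeZero n] : rhoCoeff n 0 = 0 := by
  simp [rhoCoeff]

theorem sum_rhoCoeff (n : ℕ) : ∑ j, rhoCoeff n j = n * (n ^ 2 - 1) / 12 := by
  unfold rhoCoeff
  rw [Fin.sum_univ_eq_sum_range (fun j => (j : ℂ) * (n - j) / 2), ← sum_div, sum_range_mul_sub]
  ring

theorem sum_rhoCoeff_mul_cartanA1 {n : ℕ} [NeZero n] (m : Fin n) :
    ∑ j, rhoCoeff n j * cartanA1 n j m = 1 - if m = 0 then (n : ℂ) else 0 := by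
  rw [sum_mul_cartanA1]
  obtain ⟨n, rfl⟩ := Nat.exists_eq_succ_of_ne_zero (NeZero.ne n)
  simp only [rhoCoeff, Fin.val_add_one, Fin.coe_sub_one]
  split_ifs with hm0 hlast hlast <;>
    simp only [Fin.ext_iff, Fin.val_zero, Fin.val_last] at hm0 hlast
  · rw [hm0] at hlast
    subst hlast
    simp
  · simp [hm0]
    ring
  · rw [hlast] at hm0 ⊢
    push_cast [Nat.cast_sub (Nat.one_le_iff_ne_zero.mpr hm0)]
    ring
  · push_cast [Nat.cast_sub (Nat.one_le_iff_ne_zero.mpr hm0)]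
    ring

section AffineCartan

variable {n : ℕ} {H : Type*} [AddCommGroup H] [Module ℂ H] {B : H →ₗ[ℂ] H →ₗ[ℂ] ℂ}
  {h : Fin n → H} {d : H} {Λ : Fin n → H} {c ρ : H}

/-- Nondegeneracy of `B`: `Λ_0, …, Λ_{n-1}, c` is dual to the basis `h_0, …, h_{n-1}, d`. -/
theorem eq_zero_of_apply_h_eq_zero_of_apply_d_eq_zero (hBsymm : ∀ x y : H, B x y = B y x)
    (bas : Module.Basis (Fin (n + 1)) ℂ H) (hbash : ∀ i : Fin n, bas i.castSucc = h i)
    (hbasd : bas (Fin.last n) = d) (hΛh : ∀ i j : Fin n, B (Λ i) (h j) = if i = j then 1 else 0)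
    (hΛd : ∀ i : Fin n, B (Λ i) d = 0) (hch : ∀ j : Fin n, B c (h j) = 0) (hcd : B c d = 1)
    {x : H} (hxh : ∀ i, B x (h i) = 0) (hxd : B x d = 0) : x = 0 := by
  refine bas.eq_zero_of_forall_apply_eq_zero B (Fin.snoc Λ c) (fun i j => ?_)
    (Fin.lastCases (by rwa [hbasd]) fun i => by rw [hbash, hxh])
  rw [hBsymm]
  induction i using Fin.lastCases <;> induction j using Fin.lastCases <;>
    simp [hbash, hbasd, hΛh, hΛd, hch, hcd, eq_comm, (Fin.castSucc_lt_last _).ne]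

theorem rho_eq_sum_rhoCoeff_smul_add [NeZero n] (hBsymm : ∀ x y : H, B x y = B y x)
    (hnd : ∀ x, (∀ i, B x (h i) = 0) → B x d = 0 → x = 0)
    (hhh : ∀ i j : Fin n, B (h i) (h j) = cartanA1 n i j)
    (hhd : ∀ i : Fin n, B (h i) d = if i = 0 then 1 else 0) (hdd : B d d = 0)
    (hΛh : ∀ i j : Fin n, B (Λ i) (h j) = if i = j then 1 else 0)
    (hΛd : ∀ i : Fin n, B (Λ i) d = 0) (hρ : ρ = ∑ i : Fin n, Λ i) :
    ρ = ∑ j, rhoCoeff n j • h j + (n : ℂ) • d := by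
  rw [← sub_eq_zero]
  apply hnd
  · intro m
    simp [hρ, hΛh, hhh, hBsymm d, hhd, sum_rhoCoeff_mul_cartanA1]
  · simp [hρ, hΛd, hhd, hdd, rhoCoeff_zero]

end AffineCartan

theorem sum_tau_T_minus_Ttilde_general (n : ℕ) [NeZero n]
    (H : Type*) [AddCommGroup H] [Module ℂ H]
    (B : H →ₗ[ℂ] H →ₗ[ℂ] ℂ) (hBsymm : ∀ x y : H, B x y = B y x)
    (h : Fin n → H) (d : H) (Λ : Fin n → H) (c ρ : H)
    (bas : Module.Basis (Fin (n + 1)) ℂ H)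
    (hbash : ∀ i : Fin n, bas i.castSucc = h i)
    (hbasd : bas (Fin.last n) = d)
    (hhh : ∀ i j : Fin n, B (h i) (h j) = cartanA1 n i j)
    (hhd : ∀ i : Fin n, B (h i) d = if i = 0 then 1 else 0)
    (hdd : B d d = 0)
    (hΛh : ∀ i j : Fin n, B (Λ i) (h j) = if i = j then 1 else 0)
    (hΛd : ∀ i : Fin n, B (Λ i) d = 0)
    (hch : ∀ j : Fin n, B c (h j) = 0)
    (hcd : B c d = 1)
    (hc : c = ∑ i : Fin n, h i)
    (hρ : ρ = ∑ i : Fin n, Λ i)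
    (τ : H →ₗ[ℂ] H)
    (hτh : ∀ i : Fin n, τ (h i) = h (i + 1))
    (hτρ : τ ρ = ρ) :
    ∑ k ∈ Finset.Icc 1 n,
      TensorProduct.map (τ ^ k) LinearMap.id
        (((∑ i : Fin n, h i ⊗ₜ[ℂ] Λ i) + d ⊗ₜ[ℂ] c) -
          (n : ℂ)⁻¹ • (ρ ⊗ₜ[ℂ] c + c ⊗ₜ[ℂ] ρ -
            (((n : ℂ) ^ 2 - 1) / 12) • (c ⊗ₜ[ℂ] c))) = 0 := by
  have hn0 : (n : ℂ) ≠ 0 := Nat.cast_ne_zero.mpr (NeZero.ne n)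
  have hnd (x : H) := eq_zero_of_apply_h_eq_zero_of_apply_d_eq_zero (x := x) hBsymm bas hbash
    hbasd hΛh hΛd hch hcd
  have hρd := rho_eq_sum_rhoCoeff_smul_add hBsymm hnd hhh hhd hdd hΛh hΛd hρ
  rw [TensorProduct.sum_map_apply]
  set P := ∑ k ∈ Icc 1 n, τ ^ k
  have hPh (i : Fin n) : P (h i) = c := by
    rw [LinearMap.sum_apply, Module.End.sum_Icc_pow_apply_eq_sum hτh, hc]
  have hPc : P c = (n : ℂ) • c := by
    simp [hc, hPh, Nat.cast_smul_eq_nsmul]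
  have hPρ : P ρ = (n : ℂ) • ρ := by
    rw [LinearMap.sum_apply, Module.End.sum_Icc_pow_apply_of_apply_eq hτρ, Nat.cast_smul_eq_nsmul]
  have hPd : P d = ρ - (((n : ℂ) ^ 2 - 1) / 12) • c := by
    apply smul_right_injective H hn0
    have := congrArg P hρd
    simp only [map_add, map_sum, map_smul, hPh, hPρ, ← sum_smul, sum_rhoCoeff] at this
    linear_combination (norm := module) -this
  simp only [map_sub, map_add, map_sum, map_smul, TensorProduct.map_tmul, LinearMap.id_apply, hPh,
    hPρ, hPc, hPd, ← TensorProduct.tmul_sum, ← hρ, TensorProduct.sub_tmul,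
    ← TensorProduct.smul_tmul']
  match_scalars <;> field_simp <;> ring

/-- With `T = Σ_{i} h_i ⊗ Λ_i + d ⊗ c` and
`T̃ = (1/n)(ρ ⊗ c + c ⊗ ρ - ((n²-1)/12) c ⊗ c)`, one has
`Σ_{k=1}^{n} (τ^k ⊗ id)(T - T̃) = 0`. -/
theorem sum_tau_T_minus_Ttilde (n : ℕ) [NeZero n] (hn : 2 ≤ n)
    (H : Type*) [AddCommGroup H] [Module ℂ H]
    (B : H →ₗ[ℂ] H →ₗ[ℂ] ℂ) (hBsymm : ∀ x y : H, B x y = B y x)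
    (h : Fin n → H) (d : H) (Λ : Fin n → H) (c ρ : H)
    (bas : Module.Basis (Fin (n + 1)) ℂ H)
    (hbash : ∀ i : Fin n, bas i.castSucc = h i)
    (hbasd : bas (Fin.last n) = d)
    (hhh : ∀ i j : Fin n, B (h i) (h j) = cartanA1 n i j)
    (hhd : ∀ i : Fin n, B (h i) d = if i = 0 then 1 else 0)
    (hdd : B d d = 0)
    (hΛh : ∀ i j : Fin n, B (Λ i) (h j) = if i = j then 1 else 0)
    (hΛd : ∀ i : Fin n, B (Λ i) d = 0)
    (hch : ∀ j : Fin n, B c (h j) = 0)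
    (hcd : B c d = 1)
    (hc : c = ∑ i : Fin n, h i)
    (hρ : ρ = ∑ i : Fin n, Λ i)
    (τ : H →ₗ[ℂ] H)
    (hτh : ∀ i : Fin n, τ (h i) = h (i + 1))
    (hτρ : τ ρ = ρ) :
    ∑ k ∈ Finset.Icc 1 n,
      TensorProduct.map (τ ^ k) LinearMap.id
        (((∑ i : Fin n, h i ⊗ₜ[ℂ] Λ i) + d ⊗ₜ[ℂ] c) -
          (n : ℂ)⁻¹ • (ρ ⊗ₜ[ℂ] c + c ⊗ₜ[ℂ] ρ -
            (((n : ℂ) ^ 2 - 1) / 12) • (c ⊗ₜ[ℂ] c))) = 0 :=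
  sum_tau_T_minus_Ttilde_general n H B hBsymm h d Λ c ρ bas hbash hbasd hhh hhd hdd hΛh hΛd hch hcd
    hc hρ τ hτh hτρ
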